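/- arXiv:1705.08572 — 2 statements merged into one kernel-verified Lean document; each statement's English description precedes it below -/
import Mathlib

section
/- Corollary 1: Assume the weights Q_1, …, Q_K are pairwise distinct and let Ẽ = E ∩ [0, P_max], where E = {0, P_max} ∪ {η(g_j Q_j − g_i Q_i)/(g_i g_j (Q_i − Q_j)) : 1 ≤ i < j ≤ K} ∪ {Q_i/Z − η/g_i : 1 ≤ i ≤ K}. If p* ∈ D is a global maximizer of F over D, then for every k ∈ {1, …, K} the partial sum S_k(p*) = p*_1 + ⋯ + p*_k belongs to Ẽ. -/
open Finset

/-- Prefix sum `S_k(p) = p_1 + ⋯ + p_k` (0-based: sum of the first `k` coordinates). -/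
noncomputable def Sfun (K : ℕ) (p : Fin K → ℝ) (k : ℕ) : ℝ :=
  ∑ j : Fin K, if (j : ℕ) < k then p j else 0

/-- The NOMA objective `F`. -/
noncomputable def Fobj (K : ℕ) (g Q : Fin K → ℝ) (η Z : ℝ) (p : Fin K → ℝ) : ℝ :=
  (∑ k : Fin K, Q k * Real.log (1 + p k * g k / (Sfun K p (k : ℕ) * g k + η)))
    - Z * Sfun K p K

/-- The feasible set `D`. -/
def Dfeas (K : ℕ) (Pmax : ℝ) : Set (Fin K → ℝ) :=
  {p | (∀ k, 0 ≤ p k) ∧ Sfun K p K ≤ Pmax}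

/-- The finite candidate set `E`. -/
def Ecand (K : ℕ) (g Q : Fin K → ℝ) (η Z Pmax : ℝ) : Set ℝ :=
  ({0, Pmax} : Set ℝ)
    ∪ {x | ∃ i j : Fin K, i < j ∧
        x = η * (g j * Q j - g i * Q i) / (g i * g j * (Q i - Q j))}
    ∪ {x | ∃ i : Fin K, x = Q i / Z - η / g i}

/-! At an optimum `p*` let `v = S_k(p*)` lie strictly between `0` and `P_max`, and let `i ≤ m ≤ j`
be the maximal run of indices with `S_m(p*) = v`. Moving these prefix sums together to a nearby
value `t` keeps the allocation feasible. Since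
`1 + p_k g_k / (S_{k-1} g_k + η) = (S_k g_k + η) / (S_{k-1} g_k + η)`, the objective telescopes and
depends on `t` only through `Q_i log (t g_i + η) - Q_{j+1} log (t g_{j+1} + η)`, or
`Q_i log (t g_i + η) - Z t` when `j = K`. Stationarity at `t = v` equates the marginal rate
`Q_i g_i / (v g_i + η)` with that of `j + 1`, or with `Z`, and solving for `v` gives a point
of `E`. -/

open Real

lemma Sfun_zero (K : ℕ) (p : Fin K → ℝ) : Sfun K p 0 = 0 := by
  simp [Sfun]

lemma Sfun_succ (K : ℕ) (p : Fin K → ℝ) {m : ℕ} (hm : m < K) :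
    Sfun K p (m + 1) = Sfun K p m + p ⟨m, hm⟩ := by
  rw [Sfun, Sfun, ← Fintype.sum_ite_eq ⟨m, hm⟩ p, ← Finset.sum_add_distrib]
  refine Finset.sum_congr rfl fun l _ => ?_
  have hl : (⟨m, hm⟩ : Fin K) = l ↔ (l : ℕ) = m := by rw [Fin.ext_iff, eq_comm]
  simp only [hl]
  split_ifs <;> first | omega | ring

lemma monotone_Sfun (K : ℕ) {p : Fin K → ℝ} (hp : ∀ k, 0 ≤ p k) : Monotone (Sfun K p) :=
  fun a b hab => Finset.sum_le_sum fun l _ => by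
    split_ifs <;> first | omega | exact le_rfl | exact hp l

def allocOfPrefix (K : ℕ) (s : ℕ → ℝ) : Fin K → ℝ := fun l => s (l + 1) - s l

lemma Sfun_allocOfPrefix (K : ℕ) (s : ℕ → ℝ) {m : ℕ} (hm : m ≤ K) :
    Sfun K (allocOfPrefix K s) m = s m - s 0 := by
  induction m with
  | zero => simp [Sfun_zero]
  | succ n ih =>
    rw [Sfun_succ K _ (by omega), ih (by omega), allocOfPrefix]
    ring

lemma allocOfPrefix_mem_Dfeas {K : ℕ} {Pmax : ℝ} {s : ℕ → ℝ} (hs : Monotone s) (h0 : s 0 = 0)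
    (hK : s K ≤ Pmax) : allocOfPrefix K s ∈ Dfeas K Pmax :=
  ⟨fun l => sub_nonneg.2 (hs (Nat.le_succ l)), by rwa [Sfun_allocOfPrefix K s le_rfl, h0, sub_zero]⟩

/-- Continuing the prefix sums by the budget turns the constraint `S_K ≤ Pmax` into monotonicity. -/
noncomputable def prefixSeq (K : ℕ) (p : Fin K → ℝ) (Pmax : ℝ) (m : ℕ) : ℝ :=
  if m ≤ K then Sfun K p m else Pmax

lemma prefixSeq_zero (K : ℕ) (p : Fin K → ℝ) (Pmax : ℝ) : prefixSeq K p Pmax 0 = 0 := by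
  simp [prefixSeq, Sfun_zero]

lemma allocOfPrefix_prefixSeq (K : ℕ) (p : Fin K → ℝ) (Pmax : ℝ) :
    allocOfPrefix K (prefixSeq K p Pmax) = p := by
  funext l
  rw [allocOfPrefix, prefixSeq, prefixSeq, if_pos (Nat.succ_le_of_lt l.isLt), if_pos l.isLt.le,
    Sfun_succ K p l.isLt]
  ring

lemma monotone_prefixSeq {K : ℕ} {Pmax : ℝ} {p : Fin K → ℝ} (hp : p ∈ Dfeas K Pmax) :
    Monotone (prefixSeq K p Pmax) := by
  refine monotone_nat_of_le_succ fun m => ?_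
  unfold prefixSeq
  split_ifs with h₁ h₂ h₂
  · exact monotone_Sfun K hp.1 m.le_succ
  · exact (monotone_Sfun K hp.1 h₁).trans hp.2
  · omega
  · exact le_rfl

noncomputable def prefixObj (K : ℕ) (g Q : Fin K → ℝ) (η Z : ℝ) (s : ℕ → ℝ) : ℝ :=
  (∑ k : Fin K, Q k * (log (s (k + 1) * g k + η) - log (s k * g k + η))) - Z * s K

lemma Fobj_allocOfPrefix (K : ℕ) {g : Fin K → ℝ} (Q : Fin K → ℝ) {η : ℝ} (Z : ℝ) {s : ℕ → ℝ}
    (hg : ∀ k, 0 ≤ g k) (hη : 0 < η) (h0 : s 0 = 0) (hs : ∀ m, 0 ≤ s m) :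
    Fobj K g Q η Z (allocOfPrefix K s) = prefixObj K g Q η Z s := by
  have hS : ∀ m ≤ K, Sfun K (allocOfPrefix K s) m = s m := fun m hm => by
    rw [Sfun_allocOfPrefix K s hm, h0, sub_zero]
  have hpos : ∀ m k, 0 < s m * g k + η := fun m k => by nlinarith [mul_nonneg (hs m) (hg k)]
  rw [Fobj, prefixObj, hS K le_rfl]
  congr 1
  refine Finset.sum_congr rfl fun k _ => ?_
  rw [hS k k.isLt.le, ← log_div (hpos _ k).ne' (hpos _ k).ne', allocOfPrefix]
  congr 2
  field_simp [(hpos k k).ne']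
  ring

def setBlock (s : ℕ → ℝ) (i j : ℕ) (t : ℝ) (m : ℕ) : ℝ := if i ≤ m ∧ m ≤ j then t else s m

section setBlock

variable {s : ℕ → ℝ} {i j : ℕ}

lemma setBlock_eq_self {v : ℝ} (hs : ∀ m, i ≤ m → m ≤ j → s m = v) : setBlock s i j v = s := by
  funext m
  unfold setBlock
  split_ifs with h
  · exact (hs m h.1 h.2).symm
  · rfl

lemma setBlock_of_lt {t : ℝ} {m : ℕ} (h : m < i ∨ j < m) : setBlock s i j t m = s m :=
  if_neg (by omega)

lemma monotone_setBlock {t : ℝ} (hs : Monotone s) (hi : s (i - 1) ≤ t) (hj : t ≤ s (j + 1)) :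
    Monotone (setBlock s i j t) := by
  refine monotone_nat_of_le_succ fun m => ?_
  unfold setBlock
  split_ifs with h₁ h₂ h₂
  · exact le_rfl
  · rwa [show m = j by omega]
  · rwa [show m = i - 1 by omega]
  · exact hs m.le_succ

lemma hasDerivAt_setBlock (m : ℕ) (v : ℝ) :
    HasDerivAt (fun t => setBlock s i j t m) (if i ≤ m ∧ m ≤ j then 1 else 0) v := by
  unfold setBlock
  split_ifs
  · exact hasDerivAt_id v
  · exact hasDerivAt_const v (s m)

lemma hasDerivAt_log_setBlock (m : ℕ) {c η v : ℝ} (hv : v * c + η ≠ 0) :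
    HasDerivAt (fun t => log (setBlock s i j t m * c + η))
      (if i ≤ m ∧ m ≤ j then c / (v * c + η) else 0) v := by
  unfold setBlock
  split_ifs
  · simpa using (((hasDerivAt_id v).mul_const c).add_const η).log hv
  · exact hasDerivAt_const v _

end setBlock

lemma ite_block_succ_sub {G : Type*} [AddGroup G] {i j k : ℕ} (hi : 0 < i) (hij : i ≤ j) (r : G) :
    ((if i ≤ k + 1 ∧ k + 1 ≤ j then r else 0) - if i ≤ k ∧ k ≤ j then r else 0)
      = (if k = i - 1 then r else 0) - if k = j then r else 0 := by
  split_ifs <;> first | omega | simp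

lemma Fin.sum_ite_val_eq {M : Type*} [AddCommMonoid M] {K : ℕ} (w : Fin K → M) (m : ℕ) :
    (∑ k : Fin K, if (k : ℕ) = m then w k else 0) = if h : m < K then w ⟨m, h⟩ else 0 := by
  split_ifs with h
  · rw [← Fintype.sum_ite_eq ⟨m, h⟩ w]
    simp only [Fin.ext_iff, eq_comm]
  · exact Finset.sum_eq_zero fun k _ => if_neg (by omega)

lemma hasDerivAt_prefixObj_setBlock {K : ℕ} {g : Fin K → ℝ} (Q : Fin K → ℝ) {η : ℝ} (Z : ℝ)
    (s : ℕ → ℝ) {i j : ℕ} (hi : 0 < i) (hij : i ≤ j) (hjK : j ≤ K) {v : ℝ}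
    (hv : ∀ k, v * g k + η ≠ 0) :
    HasDerivAt (fun t => prefixObj K g Q η Z (setBlock s i j t))
      (Q ⟨i - 1, by omega⟩ * (g ⟨i - 1, by omega⟩ / (v * g ⟨i - 1, by omega⟩ + η))
        - if h : j < K then Q ⟨j, h⟩ * (g ⟨j, h⟩ / (v * g ⟨j, h⟩ + η)) else Z) v := by
  have hderiv := (HasDerivAt.fun_sum (u := (univ : Finset (Fin K))) fun k _ =>
    ((hasDerivAt_log_setBlock (s := s) (i := i) (j := j) (k + 1) (hv k)).sub
      (hasDerivAt_log_setBlock (s := s) (i := i) (j := j) k (hv k))).const_mul (Q k)).sub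
    ((hasDerivAt_setBlock (s := s) (i := i) (j := j) K v).const_mul Z)
  refine hderiv.congr_deriv ?_
  simp only [ite_block_succ_sub hi hij, mul_sub, mul_ite, mul_zero, Finset.sum_sub_distrib]
  rw [Fin.sum_ite_val_eq (fun k => Q k * (g k / (v * g k + η))) (i - 1),
    Fin.sum_ite_val_eq (fun k => Q k * (g k / (v * g k + η))) j, dif_pos (by omega)]
  by_cases h : j < K
  · rw [dif_pos h, dif_pos h, if_neg (by omega)]
    ring
  · rw [dif_neg h, dif_neg h, if_pos (by omega)]
    ring

lemma eq_of_marginal_eq {qa qb ga gb η v : ℝ} (hga : ga ≠ 0) (hgb : gb ≠ 0) (hq : qa ≠ qb)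
    (ha : v * ga + η ≠ 0) (hb : v * gb + η ≠ 0)
    (h : qa * (ga / (v * ga + η)) = qb * (gb / (v * gb + η))) :
    v = η * (gb * qb - ga * qa) / (ga * gb * (qa - qb)) := by
  rw [← mul_div_assoc, ← mul_div_assoc, div_eq_div_iff ha hb] at h
  rw [eq_div_iff (mul_ne_zero (mul_ne_zero hga hgb) (sub_ne_zero.2 hq))]
  linear_combination h

lemma eq_of_marginal_eq_price {q g η v Z : ℝ} (hg : g ≠ 0) (hZ : Z ≠ 0) (h0 : v * g + η ≠ 0)
    (h : q * (g / (v * g + η)) = Z) : v = q / Z - η / g := by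
  rw [← mul_div_assoc, div_eq_iff h0] at h
  rw [div_sub_div _ _ hZ hg, eq_div_iff (mul_ne_zero hZ hg)]
  linear_combination -h

lemma mem_Ecand_of_isLocalMax {K : ℕ} {g Q : Fin K → ℝ} {η Z Pmax : ℝ} {s : ℕ → ℝ}
    {i j : ℕ} {v : ℝ} (hgpos : ∀ k, 0 < g k) (hQdist : ∀ a b : Fin K, a ≠ b → Q a ≠ Q b)
    (hη : 0 < η) (hZ : Z ≠ 0) (hv : 0 < v) (hi : 0 < i) (hij : i ≤ j) (hjK : j ≤ K)
    (hmax : IsLocalMax (fun t => prefixObj K g Q η Z (setBlock s i j t)) v) :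
    v ∈ Ecand K g Q η Z Pmax := by
  have hden : ∀ k, v * g k + η ≠ 0 := fun k => by nlinarith [mul_pos hv (hgpos k)]
  have hcrit := hmax.hasDerivAt_eq_zero (hasDerivAt_prefixObj_setBlock Q Z s hi hij hjK hden)
  rw [sub_eq_zero] at hcrit
  split_ifs at hcrit with hj
  · have hab : (⟨i - 1, by omega⟩ : Fin K) < ⟨j, hj⟩ := Fin.mk_lt_mk.2 (by omega)
    exact Or.inl (Or.inr ⟨_, _, hab, eq_of_marginal_eq (hgpos _).ne' (hgpos _).ne'
      (hQdist _ _ hab.ne) (hden _) (hden _) hcrit⟩)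
  · exact Or.inr ⟨_, eq_of_marginal_eq_price (hgpos _).ne' hZ (hden _) hcrit⟩

lemma Monotone.exists_level_block {α : Type*} [LinearOrder α] {s : ℕ → α} (hs : Monotone s)
    {k N : ℕ} (h0 : s 0 < s k) (hN : s k < s (N + 1)) :
    ∃ i j, 0 < i ∧ i ≤ j ∧ j ≤ N ∧ s (i - 1) < s k ∧ s k < s (j + 1) ∧
      ∀ m, i ≤ m → m ≤ j → s m = s k := by
  have hkN : k ≤ N := by
    by_contra h
    exact (hN.trans_le (hs (by omega))).false
  have hex : ∃ m, s k ≤ s m := ⟨k, le_rfl⟩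
  set i := Nat.find hex
  set j := Nat.findGreatest (fun m => s m ≤ s k) N
  have hki : s k ≤ s i := Nat.find_spec hex
  have hjk : s j ≤ s k := Nat.findGreatest_spec (P := fun m => s m ≤ s k) hkN le_rfl
  have hi : 0 < i := Nat.pos_of_ne_zero fun h => h0.not_ge (h ▸ hki)
  have hjN : j ≤ N := Nat.findGreatest_le N
  refine ⟨i, j, hi, (Nat.find_min' hex le_rfl).trans (Nat.le_findGreatest hkN le_rfl), hjN,
    not_le.1 (Nat.find_min hex (by omega)), ?_,
    fun m h₁ h₂ => le_antisymm ((hs h₂).trans hjk) (hki.trans (hs h₁))⟩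
  by_cases h : j + 1 ≤ N
  · exact not_le.1 (Nat.findGreatest_is_greatest (Nat.lt_succ_self j) h)
  · rwa [show j = N by omega]

lemma isLocalMax_prefixObj_setBlock {K : ℕ} {g Q : Fin K → ℝ} {η Z Pmax : ℝ} {p : Fin K → ℝ}
    (hg : ∀ k, 0 ≤ g k) (hη : 0 < η) (hp : p ∈ Dfeas K Pmax)
    (hopt : ∀ q ∈ Dfeas K Pmax, Fobj K g Q η Z q ≤ Fobj K g Q η Z p) {i j : ℕ} {v : ℝ}
    (hi : 0 < i) (hjK : j ≤ K) (hlo : prefixSeq K p Pmax (i - 1) < v)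
    (hhi : v < prefixSeq K p Pmax (j + 1))
    (hblock : ∀ m, i ≤ m → m ≤ j → prefixSeq K p Pmax m = v) :
    IsLocalMax (fun t => prefixObj K g Q η Z (setBlock (prefixSeq K p Pmax) i j t)) v := by
  set s := prefixSeq K p Pmax
  have hs : Monotone s := monotone_prefixSeq hp
  have hobj {r : ℕ → ℝ} (hr : Monotone r) (h0 : r 0 = 0) :
      Fobj K g Q η Z (allocOfPrefix K r) = prefixObj K g Q η Z r :=
    Fobj_allocOfPrefix K Q Z hg hη h0 fun m => h0 ▸ hr m.zero_le
  filter_upwards [Ioo_mem_nhds hlo hhi] with t ht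
  have hmono := monotone_setBlock hs ht.1.le ht.2.le
  have h0 : setBlock s i j t 0 = 0 := (setBlock_of_lt (Or.inl hi)).trans (prefixSeq_zero K p Pmax)
  have hK : setBlock s i j t K ≤ Pmax :=
    (hmono K.le_succ).trans_eq ((setBlock_of_lt (Or.inr (by omega))).trans (if_neg (by omega)))
  calc prefixObj K g Q η Z (setBlock s i j t)
      = Fobj K g Q η Z (allocOfPrefix K (setBlock s i j t)) := (hobj hmono h0).symm
    _ ≤ Fobj K g Q η Z p := hopt _ (allocOfPrefix_mem_Dfeas hmono h0 hK)
    _ = prefixObj K g Q η Z (setBlock s i j v) := by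
      rw [setBlock_eq_self hblock, ← hobj hs (prefixSeq_zero K p Pmax), allocOfPrefix_prefixSeq]

theorem finite_point_structure_truncated_general
    (K : ℕ) (g Q : Fin K → ℝ) (η Z Pmax : ℝ)
    (hgpos : ∀ i, 0 < g i)
    (hQdist : ∀ i j : Fin K, i ≠ j → Q i ≠ Q j)
    (hη : 0 < η) (hZ : 0 < Z)
    (pstar : Fin K → ℝ) (hfeas : pstar ∈ Dfeas K Pmax)
    (hopt : ∀ q ∈ Dfeas K Pmax, Fobj K g Q η Z q ≤ Fobj K g Q η Z pstar) :
    ∀ k : ℕ, 1 ≤ k → k ≤ K →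
      Sfun K pstar k ∈ Ecand K g Q η Z Pmax ∩ Set.Icc (0 : ℝ) Pmax := by
  intro k _ hkK
  set s := prefixSeq K pstar Pmax
  have hs : Monotone s := monotone_prefixSeq hfeas
  have hsk : s k = Sfun K pstar k := if_pos hkK
  have hs0 : s 0 = 0 := prefixSeq_zero K pstar Pmax
  have hsK : s (K + 1) = Pmax := if_neg (by omega)
  rw [← hsk]
  refine ⟨?_, hs0 ▸ hs k.zero_le, hsK ▸ hs (by omega)⟩
  rcases (hs0 ▸ hs k.zero_le).eq_or_lt with h0 | h0
  · exact Or.inl (Or.inl (Or.inl h0.symm))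
  rcases (hsK ▸ hs (show k ≤ K + 1 by omega)).eq_or_lt with hP | hP
  · exact Or.inl (Or.inl (Or.inr hP))
  obtain ⟨i, j, hi, hij, hjK, hlo, hhi, hblock⟩ :=
    hs.exists_level_block (hs0 ▸ h0) (hsK ▸ hP)
  exact mem_Ecand_of_isLocalMax hgpos hQdist hη hZ.ne' h0 hi hij hjK
    (isLocalMax_prefixObj_setBlock (fun k => (hgpos k).le) hη hfeas hopt hi hjK hlo hhi hblock)

/-- **Corollary 1.** If `p*` is a global maximizer of `F` over `D`, then every partial sum
`S_k(p*)`, `1 ≤ k ≤ K`, lies in `Ẽ = E ∩ [0, P_max]`. -/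
theorem finite_point_structure_truncated
    (K : ℕ) (hK : 1 ≤ K) (g Q : Fin K → ℝ) (η Z Pmax : ℝ)
    (hg : ∀ i j : Fin K, i ≤ j → g j ≤ g i) (hgpos : ∀ i, 0 < g i)
    (hQpos : ∀ i, 0 < Q i) (hQdist : ∀ i j : Fin K, i ≠ j → Q i ≠ Q j)
    (hη : 0 < η) (hZ : 0 < Z) (hP : 0 < Pmax)
    (pstar : Fin K → ℝ) (hfeas : pstar ∈ Dfeas K Pmax)
    (hopt : ∀ q ∈ Dfeas K Pmax, Fobj K g Q η Z q ≤ Fobj K g Q η Z pstar) :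
    ∀ k : ℕ, 1 ≤ k → k ≤ K →
      Sfun K pstar k ∈ Ecand K g Q η Z Pmax ∩ Set.Icc (0 : ℝ) Pmax :=
  finite_point_structure_truncated_general K g Q η Z Pmax hgpos hQdist hη hZ pstar hfeas hopt
end

section
/- Total power identity under slackness: If p* ∈ D is a global maximizer of F over D with S_K(p*) < P_max, and m ∈ {1, …, K} is an index with p*_m > 0 and p*_j = 0 for all j > m, then the total allocated power satisfies S_K(p*) = Q_m/Z − η/g_m. -/
open Finset

/-! Write `S = S_K(p*)`. Moving the power of the last active user `m` by `t` leaves the rates of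
the earlier users unchanged (their interference only involves users before them) and those of the
later, silent users zero, while the rate of user `m` becomes
`log ((S + t) g_m + η) - log (S_{m-1} g_m + η)`. So `t ↦ Q_m log (S g_m + η + g_m t) - Z t` has a
local maximum at `0`, because `p*_m > 0` and the slack let `t` take both signs, and its derivative
`Q_m g_m / (S g_m + η) - Z` vanishes there. -/

open Real

section PrefixSum

variable {K : ℕ} (p : Fin K → ℝ)

lemma Sfun_nonneg (hp : ∀ k, 0 ≤ p k) (k : ℕ) : 0 ≤ Sfun K p k :=
  Finset.sum_nonneg fun j _ => by split_ifs <;> simp [hp j]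

lemma Sfun_update_add (m : Fin K) (t : ℝ) (k : ℕ) :
    Sfun K (Function.update p m (p m + t)) k = Sfun K p k + if (m : ℕ) < k then t else 0 := by
  have hterm : ∀ j : Fin K,
      (if (j : ℕ) < k then Function.update p m (p m + t) j else 0)
        = (if (j : ℕ) < k then p j else 0) + if j = m then (if (m : ℕ) < k then t else 0) else 0 := by
    intro j
    by_cases hj : j = m
    · subst hj
      by_cases hjk : (j : ℕ) < k <;> simp [hjk]
    · simp [hj]
  simp only [Sfun, Finset.sum_congr rfl fun j _ => hterm j, Finset.sum_add_distrib,
    Finset.sum_ite_eq', Finset.mem_univ, if_true]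

lemma Sfun_eq_add_of_forall_gt_eq_zero {m : Fin K} (hzero : ∀ j, m < j → p j = 0) :
    Sfun K p K = Sfun K p m + p m := by
  have hterm : ∀ j : Fin K, (if (j : ℕ) < K then p j else 0)
      = (if (j : ℕ) < m then p j else 0) + if j = m then p m else 0 := by
    intro j
    rcases lt_trichotomy j m with h | rfl | h
    · simp [h, h.ne]
    · simp
    · simp [hzero j h, h.ne', not_lt.mpr h.le]
  simp only [Sfun, Finset.sum_congr rfl fun j _ => hterm j, Finset.sum_add_distrib,
    Finset.sum_ite_eq', Finset.mem_univ, if_true]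

end PrefixSum

lemma update_add_mem_Dfeas {K : ℕ} {Pmax : ℝ} {p : Fin K → ℝ} (hp : p ∈ Dfeas K Pmax)
    {m : Fin K} {t : ℝ} (ht : 0 ≤ p m + t) (htP : Sfun K p K + t ≤ Pmax) :
    Function.update p m (p m + t) ∈ Dfeas K Pmax := by
  refine ⟨fun k => ?_, ?_⟩
  · rcases eq_or_ne k m with rfl | hk
    · simpa using ht
    · simpa [Function.update_of_ne hk] using hp.1 k
  · simpa [Sfun_update_add] using htP

section LastActiveUser

variable {K : ℕ} {g Q : Fin K → ℝ} {η : ℝ} {p : Fin K → ℝ} {m : Fin K}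

lemma rate_update_last_active (hp : ∀ k, 0 ≤ p k) (hgm : 0 < g m) (hη : 0 < η)
    (hzero : ∀ j, m < j → p j = 0) {t : ℝ} (ht : 0 ≤ p m + t) (k : Fin K) :
    Q k * log (1 + Function.update p m (p m + t) k * g k
        / (Sfun K (Function.update p m (p m + t)) k * g k + η))
      = Q k * log (1 + p k * g k / (Sfun K p k * g k + η))
        + if k = m then
            Q m * (log (Sfun K p K * g m + η + g m * t) - log (Sfun K p K * g m + η))
          else 0 := by
  rcases lt_trichotomy k m with h | rfl | h
  · simp [Sfun_update_add, h.ne, not_lt.mpr h.le]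
  · have hc : 0 ≤ Sfun K p k := Sfun_nonneg p hp k
    have hden : 0 < Sfun K p k * g k + η := by positivity
    have hrate : ∀ s, 1 + s * g k / (Sfun K p k * g k + η)
        = ((Sfun K p k + s) * g k + η) / (Sfun K p k * g k + η) := by
      intro s
      field_simp
      ring
    have hnum : 0 < (Sfun K p k + (p k + t)) * g k + η := by
      have : 0 ≤ Sfun K p k + (p k + t) := by linarith
      positivity
    have hnum' : 0 < (Sfun K p k + p k) * g k + η := by
      have := add_nonneg hc (hp k)
      positivity
    rw [Sfun_update_add, if_neg (lt_irrefl _), add_zero, Function.update_self, if_pos rfl,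
      hrate, hrate, log_div hnum.ne' hden.ne', log_div hnum'.ne' hden.ne',
      Sfun_eq_add_of_forall_gt_eq_zero p hzero]
    ring_nf
  · simp [hzero k h, h.ne']

lemma Fobj_update_last_active (Z : ℝ) (hp : ∀ k, 0 ≤ p k) (hgm : 0 < g m) (hη : 0 < η)
    (hzero : ∀ j, m < j → p j = 0) {t : ℝ} (ht : 0 ≤ p m + t) :
    Fobj K g Q η Z (Function.update p m (p m + t)) = Fobj K g Q η Z p
      + (Q m * (log (Sfun K p K * g m + η + g m * t) - log (Sfun K p K * g m + η)) - Z * t) := by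
  unfold Fobj
  rw [Finset.sum_congr rfl fun k _ => rate_update_last_active hp hgm hη hzero ht k,
    Finset.sum_add_distrib, Finset.sum_ite_eq', if_pos (Finset.mem_univ m), Sfun_update_add,
    if_pos m.isLt]
  ring

lemma isLocalMax_last_active_power {Z Pmax : ℝ} (hfeas : p ∈ Dfeas K Pmax)
    (hopt : ∀ q ∈ Dfeas K Pmax, Fobj K g Q η Z q ≤ Fobj K g Q η Z p)
    (hslack : Sfun K p K < Pmax) (hgm : 0 < g m) (hη : 0 < η) (hm : 0 < p m)
    (hzero : ∀ j, m < j → p j = 0) :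
    IsLocalMax (fun t => Q m * log (Sfun K p K * g m + η + g m * t) - Z * t) 0 := by
  filter_upwards [Ioo_mem_nhds (neg_neg_of_pos hm) (sub_pos.mpr hslack)] with t ht
  have ht0 : 0 ≤ p m + t := by linarith [ht.1]
  have hq := hopt _ (update_add_mem_Dfeas hfeas ht0 (by linarith [ht.2]))
  rw [Fobj_update_last_active Z hfeas.1 hgm hη hzero ht0] at hq
  simp only [mul_zero, add_zero, sub_zero]
  linarith

end LastActiveUser

lemma mul_div_eq_of_isLocalMax_log_add_mul_sub {a b x Z : ℝ} (hx : x ≠ 0)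
    (hmax : IsLocalMax (fun t => a * log (x + b * t) - Z * t) 0) : a * (b / x) = Z := by
  have hlin : HasDerivAt (fun t => x + b * t) b 0 := by
    simpa using ((hasDerivAt_id (0 : ℝ)).const_mul b).const_add x
  have hderiv : HasDerivAt (fun t => a * log (x + b * t) - Z * t) (a * (b / x) - Z) 0 := by
    simpa using ((hlin.log (by simpa using hx)).const_mul a).fun_sub
      ((hasDerivAt_id' (0 : ℝ)).const_mul Z)
  exact sub_eq_zero.mp (hmax.hasDerivAt_eq_zero hderiv)

theorem total_power_identity_general
    (K : ℕ) (g Q : Fin K → ℝ) (η Z Pmax : ℝ)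
    (hgpos : ∀ i, 0 < g i)
    (hη : 0 < η) (hZ : 0 < Z)
    (pstar : Fin K → ℝ) (hfeas : pstar ∈ Dfeas K Pmax)
    (hopt : ∀ q ∈ Dfeas K Pmax, Fobj K g Q η Z q ≤ Fobj K g Q η Z pstar)
    (hslack : Sfun K pstar K < Pmax)
    (m : Fin K) (hm : 0 < pstar m) (hzero : ∀ j : Fin K, m < j → pstar j = 0) :
    Sfun K pstar K = Q m / Z - η / g m := by
  have hgm := hgpos m
  have hx : 0 < Sfun K pstar K * g m + η := by
    have := Sfun_nonneg pstar hfeas.1 K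
    positivity
  have hcrit := mul_div_eq_of_isLocalMax_log_add_mul_sub hx.ne'
    (isLocalMax_last_active_power hfeas hopt hslack hgm hη hm hzero)
  rw [mul_div_assoc', div_eq_iff hx.ne'] at hcrit
  field_simp
  linarith

/-- **Total power identity under slackness.** If `p*` is a global maximizer of `F` over `D`
with `S_K(p*) < P_max`, and `m` is the last index with `p*_m > 0` (i.e., `p*_j = 0` for all
`j > m`), then `S_K(p*) = Q_m/Z − η/g_m`. -/
theorem total_power_identity
    (K : ℕ) (hK : 1 ≤ K) (g Q : Fin K → ℝ) (η Z Pmax : ℝ)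
    (hg : ∀ i j : Fin K, i ≤ j → g j ≤ g i) (hgpos : ∀ i, 0 < g i)
    (hQpos : ∀ i, 0 < Q i) (hη : 0 < η) (hZ : 0 < Z) (hP : 0 < Pmax)
    (pstar : Fin K → ℝ) (hfeas : pstar ∈ Dfeas K Pmax)
    (hopt : ∀ q ∈ Dfeas K Pmax, Fobj K g Q η Z q ≤ Fobj K g Q η Z pstar)
    (hslack : Sfun K pstar K < Pmax)
    (m : Fin K) (hm : 0 < pstar m) (hzero : ∀ j : Fin K, m < j → pstar j = 0) :
    Sfun K pstar K = Q m / Z - η / g m :=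
  total_power_identity_general K g Q η Z Pmax hgpos hη hZ pstar hfeas hopt hslack m hm hzero
end
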